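/- Let C_0,...,C_{M−1} be a uniform collection of perfect r-colorings of H(n,q) with common quotient matrix S and density vector ρ, let E be a perfect Mq-coloring of H(M,q) with quotient matrix T where T_{i,j} = 0 if i ≡ j (mod q) and T_{i,j} = 1 otherwise. For 0 ≤ i < M and 0 ≤ j < q define D_{qi+j}(x^0,...,x^{q−1}) = C_i(x^j) on H(qn,q), and define F on H(M + qn, q) by F(y, x) = D_{E(y)}(x). Then F is a perfect coloring with quotient matrix S + (q−1)²·n·I + (q−1)·M·P, where P is the square matrix each of whose rows equals ρ. -/

import Mathlib

/-!
Write a vertex of `H(M + qn, q)` as `(y, x)` and let `E y = q i + j`, so that `F (y, x) = C_i (x^j)`.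
A neighbour differs either in `y` or in `x`. Since `E` is perfect with the given `T`, the
neighbours `y'` of `y` take each colour `q i' + j'` with `j' ≠ j` exactly once; for fixed `j'`
the colours `C_{i'} (x^{j'})` run over the whole collection at the word `x^{j'}`, so by uniformity
each of the `q - 1` blocks `j'` contributes the multiplicity of `b`. Changing `x` inside block `j`
is a step of the perfect colouring `C_i`, contributing `S`; changing one of the `(q - 1) n`
coordinates outside block `j` keeps the colour, contributing `(q - 1)² n` on the diagonal.
-/

/-- The Hamming graph `H(n, α)`: vertices are words of length `n` over `α`,
adjacent iff they differ in exactly one coordinate. -/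
def HammingGraph (n : ℕ) (α : Type*) [DecidableEq α] : SimpleGraph (Fin n → α) where
  Adj x y := hammingDist x y = 1
  symm := ⟨fun x y h => by show hammingDist y x = 1; rw [hammingDist_comm]; exact h⟩
  loopless := ⟨fun x h => by simp only [hammingDist_self] at h; exact absurd h (by omega)⟩

instance {n : ℕ} {α : Type*} [DecidableEq α] : DecidableRel (HammingGraph n α).Adj :=
  fun x y => inferInstanceAs (Decidable (hammingDist x y = 1))

/-- `f` is a perfect coloring of `G` with quotient matrix `S`: every vertex of
color `i` has exactly `S i j` neighbors of color `j`. -/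
def IsPerfectColoring {V K : Type*} [Fintype V] [DecidableEq K] (G : SimpleGraph V)
    [DecidableRel G.Adj] (f : V → K) (S : K → K → ℕ) : Prop :=
  ∀ x : V, ∀ j : K, (Finset.univ.filter (fun y => G.Adj x y ∧ f y = j)).card = S (f x) j

/-- A function on words depends essentially on its `k`-th argument. -/
def EssentialDep {α K : Type*} {n : ℕ} (f : (Fin n → α) → K) (k : Fin n) : Prop :=
  ∃ x y : Fin n → α, (∀ t, t ≠ k → x t = y t) ∧ f x ≠ f y


/-- The `j`-th block of length `n` of a word of length `q*n`. -/
def blockCoords (q n : ℕ) (j : Fin q) (x : Fin (q * n) → Fin q) : Fin n → Fin q :=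
  fun t => x ⟨(j : ℕ) * n + (t : ℕ), by
    have h1 : (j : ℕ) + 1 ≤ q := j.isLt
    have h2 : (t : ℕ) < n := t.isLt
    nlinarith⟩

/-- The coloring `F(y,x) = D_{E(y)}(x)` of `H(M + qn, q)`, where
`D_{q·i+j}(x⁰,…,x^{q-1}) = Cᵢ(xʲ)`. -/
def Fcol {K : Type*} {q n M : ℕ} (hq : 0 < q)
    (C : Fin M → (Fin n → Fin q) → K)
    (E : (Fin M → Fin q) → Fin (M * q))
    (z : Fin (M + q * n) → Fin q) : K :=
  let e : Fin (M * q) := E (fun i => z (Fin.castAdd (q * n) i))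
  C ⟨(e : ℕ) / q, Nat.div_lt_of_lt_mul (by
        exact lt_of_lt_of_le e.isLt (le_of_eq (Nat.mul_comm M q)))⟩
    (blockCoords q n ⟨(e : ℕ) % q, Nat.mod_lt _ hq⟩ (fun t => z (Fin.natAdd M t)))

open Finset Function

section Hamming

variable {α : Type*} [DecidableEq α] {m : ℕ}

lemma hammingDist_update_of_ne (x : Fin m → α) {p : Fin m} {v : α} (hv : v ≠ x p) :
    hammingDist x (update x p v) = 1 := by
  rw [hammingDist, card_eq_one]
  refine ⟨p, ?_⟩
  ext i
  rcases eq_or_ne i p with rfl | h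
  · simp [hv.symm]
  · simp [h]

lemma exists_update_of_hammingDist_eq_one {x y : Fin m → α} (h : hammingDist x y = 1) :
    ∃ p, y p ≠ x p ∧ update x p (y p) = y := by
  obtain ⟨p, hp⟩ := card_eq_one.mp h
  have hdiff : ∀ i, x i ≠ y i ↔ i = p := fun i => by
    simpa using Finset.ext_iff.mp hp i
  refine ⟨p, fun h' => (hdiff p).mpr rfl h'.symm, ?_⟩
  ext i : 1
  rcases eq_or_ne i p with rfl | hi
  · simp
  · rw [update_of_ne hi]
    exact not_not.mp ((hdiff i).not.mpr hi)

lemma update_append_castAdd {N : ℕ} (y : Fin m → α) (x : Fin N → α) (p : Fin m) (v : α) :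
    update (Fin.append y x) (Fin.castAdd N p) v = Fin.append (update y p v) x := by
  ext k
  refine Fin.addCases (fun i => ?_) (fun t => ?_) k
  · simp [update_apply]
  · simp [update_apply, Fin.ext_iff]
    omega

lemma update_append_natAdd {N : ℕ} (y : Fin m → α) (x : Fin N → α) (p : Fin N) (v : α) :
    update (Fin.append y x) (Fin.natAdd m p) v = Fin.append y (update x p v) := by
  ext k
  refine Fin.addCases (fun i => ?_) (fun t => ?_) k
  · simp [update_apply, Fin.ext_iff]
    omega
  · simp [update_apply]

variable [Fintype α]

lemma card_filter_hammingAdj (x : Fin m → α) (P : (Fin m → α) → Prop) [DecidablePred P] :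
    #{y | (HammingGraph m α).Adj x y ∧ P y} = ∑ p, #{v | v ≠ x p ∧ P (update x p v)} := by
  rw [← card_sigma]
  refine (card_bij (fun pv _ => update x pv.1 pv.2) ?_ ?_ ?_).symm
  · rintro ⟨p, v⟩ h
    simp only [mem_sigma, mem_filter, mem_univ, true_and] at h ⊢
    exact ⟨hammingDist_update_of_ne x h.1, h.2⟩
  · rintro ⟨p, v⟩ h ⟨p', v'⟩ h' heq
    simp only [mem_sigma, mem_filter, mem_univ, true_and] at h h' heq
    have hp : p = p' := by
      by_contra hne
      have hval := congrFun heq p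
      rw [update_self, update_of_ne hne] at hval
      exact h.1 hval
    subst hp
    simpa using congrFun heq p
  · intro y hy
    simp only [mem_filter, mem_univ, true_and] at hy
    obtain ⟨p, hp, hupd⟩ := exists_update_of_hammingDist_eq_one hy.1
    exact ⟨⟨p, y p⟩, by simpa [hupd] using And.intro hp hy.2, hupd⟩

lemma card_filter_hammingAdj_append {N : ℕ} (y : Fin m → α) (x : Fin N → α)
    (P : (Fin (m + N) → α) → Prop) [DecidablePred P] :
    #{z | (HammingGraph (m + N) α).Adj (Fin.append y x) z ∧ P z}
      = #{y' | (HammingGraph m α).Adj y y' ∧ P (Fin.append y' x)}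
        + #{x' | (HammingGraph N α).Adj x x' ∧ P (Fin.append y x')} := by
  simp only [card_filter_hammingAdj, Fin.sum_univ_add, Fin.append_left, Fin.append_right]
  congr 1 <;> refine sum_congr rfl fun p _ => ?_ <;> congr! 3 with v
  · rw [update_append_castAdd]
  · rw [update_append_natAdd]

lemma card_filter_ne_const_and (c : α) (Q : Prop) [Decidable Q] :
    #{v | v ≠ c ∧ Q} = if Q then Fintype.card α - 1 else 0 := by
  by_cases hQ : Q <;> simp [hQ, filter_ne', card_erase_of_mem]

lemma IsPerfectColoring.card_filter_hammingAdj_comp_embedding {K : Type*} [DecidableEq K]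
    {n N : ℕ} {f : (Fin n → α) → K} {S : K → K → ℕ}
    (hf : IsPerfectColoring (HammingGraph n α) f S) (π : Fin n ↪ Fin N) (x : Fin N → α) (b : K) :
    #{x' | (HammingGraph N α).Adj x x' ∧ f (x' ∘ π) = b}
      = S (f (x ∘ π)) b + if f (x ∘ π) = b then (N - n) * (Fintype.card α - 1) else 0 := by
  rw [card_filter_hammingAdj, ← sum_add_sum_compl (univ.map π), sum_map]
  congr 1
  · rw [← hf (x ∘ π) b, card_filter_hammingAdj]
    refine sum_congr rfl fun s _ => ?_
    simp only [update_comp_eq_of_injective _ π.injective, comp_apply]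
  · have hoff : ∀ p ∈ (univ.map π)ᶜ, ∀ v, update x p v ∘ π = x ∘ π := fun p hp v =>
      update_comp_eq_of_forall_ne _ _ fun s hs => by simp [← hs] at hp
    rw [sum_congr rfl (g := fun _ => if f (x ∘ π) = b then Fintype.card α - 1 else 0)
      fun p hp => by simp only [hoff p hp, card_filter_ne_const_and]]
    rw [sum_const, card_compl, card_map, card_univ, Fintype.card_fin, Fintype.card_fin,
      smul_eq_mul, mul_ite, mul_zero]

end Hamming

lemma IsPerfectColoring.card_filter_adj_comp {V L K : Type*} [Fintype V] [Fintype L]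
    [DecidableEq L] [DecidableEq K] {G : SimpleGraph V} [DecidableRel G.Adj] {E : V → L}
    {T : L → L → ℕ} (hE : IsPerfectColoring G E T) (g : L → K) (y : V) (b : K) :
    #{y' | G.Adj y y' ∧ g (E y') = b} = ∑ l with g l = b, T (E y) l := by
  rw [card_eq_sum_card_fiberwise (f := E) (t := {l | g l = b})
    fun y' hy' => by simpa using (mem_filter.mp hy').2.2]
  refine sum_congr rfl fun l hl => ?_
  rw [← hE y l, filter_filter]
  congr 1
  refine filter_congr fun y' _ => ?_
  have hgl : g l = b := (mem_filter.mp hl).2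
  constructor
  · exact fun h => ⟨h.1.1, h.2⟩
  · exact fun h => ⟨⟨h.1, h.2 ▸ hgl⟩, h.2⟩

lemma card_filter_eq_of_multiset_map_eq {ι K : Type*} [Fintype ι] [DecidableEq K]
    {f g : ι → K} (h : univ.val.map f = univ.val.map g) (b : K) :
    #{i | f i = b} = #{i | g i = b} := by
  have hcount := congrArg (Multiset.countP (· = b)) h
  simp only [Multiset.countP_map] at hcount
  exact hcount

def blockEmbedding (q n : ℕ) (j : Fin q) : Fin n ↪ Fin (q * n) :=
  ⟨fun t => finProdFinEquiv (j, t), fun _ _ h => by simpa using finProdFinEquiv.injective h⟩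

lemma blockCoords_eq_comp (q n : ℕ) (j : Fin q) (x : Fin (q * n) → Fin q) :
    blockCoords q n j x = x ∘ blockEmbedding q n j := by
  funext t
  simp only [blockCoords, comp_apply]
  congr 1
  ext
  show (j : ℕ) * n + t = t + n * j
  ring

lemma Fcol_append {K : Type*} {q n M : ℕ} (hq : 0 < q) (C : Fin M → (Fin n → Fin q) → K)
    (E : (Fin M → Fin q) → Fin (M * q)) (y : Fin M → Fin q) (x : Fin (q * n) → Fin q) :
    Fcol hq C E (Fin.append y x) = C (E y).divNat (blockCoords q n (E y).modNat x) := by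
  simp only [Fcol, Fin.append_left, Fin.append_right]
  rfl

lemma sum_filter_divNat_modNat {K : Type*} [DecidableEq K] {M q : ℕ} (g : Fin M → Fin q → K)
    (b : K) (j₀ : Fin q) :
    ∑ e : Fin (M * q) with g e.divNat e.modNat = b, (if j₀ = e.modNat then 0 else (1 : ℕ))
      = ∑ j ∈ {j₀}ᶜ, #{i | g i j = b} := by
  rw [sum_filter]
  refine (finProdFinEquiv.symm.sum_comp
    fun ij => if g ij.1 ij.2 = b then if j₀ = ij.2 then 0 else (1 : ℕ) else 0).trans ?_
  rw [Fintype.sum_prod_type, sum_comm, Fintype.sum_eq_add_sum_compl j₀]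
  simp only [↓reduceIte, ite_self, sum_const_zero, zero_add]
  refine sum_congr rfl fun j hj => ?_
  have hne : j₀ ≠ j := Ne.symm (by simpa using hj)
  simp only [hne, ↓reduceIte, card_filter]

/-- The term `(q-1)·M·P` of the paper appears as `(q-1)` times the multiplicity of the colour `b`
at the all-zero word, which by uniformity is `M ρ_b` at every word. -/
theorem stmt9_general {K : Type*} [DecidableEq K] {q n M : ℕ} (hq : 0 < q)
    (C : Fin M → (Fin n → Fin q) → K) (S : K → K → ℕ)
    (hperf : ∀ m, IsPerfectColoring (HammingGraph n (Fin q)) (C m) S)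
    (huni : ∀ x y : Fin n → Fin q,
      Multiset.map (fun m => C m x) Finset.univ.val
        = Multiset.map (fun m => C m y) Finset.univ.val)
    (E : (Fin M → Fin q) → Fin (M * q))
    (hE : IsPerfectColoring (HammingGraph M (Fin q)) E
      (fun a b => if (a : ℕ) % q = (b : ℕ) % q then 0 else 1)) :
    IsPerfectColoring (HammingGraph (M + q * n) (Fin q)) (Fcol hq C E)
      (fun a b => S a b + (if a = b then (q - 1) ^ 2 * n else 0)
        + (q - 1) * (Finset.univ.filter
            fun m : Fin M => C m (fun _ => (⟨0, hq⟩ : Fin q)) = b).card) := by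
  intro z b
  obtain ⟨y, x, rfl⟩ : ∃ y x, Fin.append y x = z := ⟨_, _, Fin.append_castAdd_natAdd⟩
  have hY : #{y' | (HammingGraph M (Fin q)).Adj y y' ∧ Fcol hq C E (Fin.append y' x) = b}
      = (q - 1) * #{m | C m (fun _ => ⟨0, hq⟩) = b} := by
    simp only [Fcol_append]
    rw [hE.card_filter_adj_comp (fun e => C e.divNat (blockCoords q n e.modNat x))]
    simp only [← Fin.coe_modNat, Fin.val_inj]
    rw [sum_filter_divNat_modNat (fun i j => C i (blockCoords q n j x)),
      sum_congr rfl fun j _ => card_filter_eq_of_multiset_map_eq (huni _ _) b, sum_const,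
      card_compl, card_singleton, Fintype.card_fin, smul_eq_mul]
  have hX : #{x' | (HammingGraph (q * n) (Fin q)).Adj x x' ∧ Fcol hq C E (Fin.append y x') = b}
      = S (Fcol hq C E (Fin.append y x)) b
        + if Fcol hq C E (Fin.append y x) = b then (q - 1) ^ 2 * n else 0 := by
    simp only [Fcol_append, blockCoords_eq_comp]
    rw [(hperf _).card_filter_hammingAdj_comp_embedding, Fintype.card_fin, ← Nat.sub_one_mul]
    congr 2
    ring
  rw [card_filter_hammingAdj_append, hY, hX]
  exact add_comm _ _

/-- Main construction: `F(y,x) = D_{E(y)}(x)` is a perfect coloring of `H(M+qn,q)`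
with quotient matrix `S + (q-1)²·n·I + (q-1)·M·P`, where the row of `P` is the
density vector, so `(q-1)·M·P_{a,b} = (q-1) · (multiplicity of color b in the
uniform collection)`. -/
theorem stmt9 {K : Type*} [Fintype K] [DecidableEq K] {q n M : ℕ} (hq : 0 < q)
    [NeZero M]
    (C : Fin M → (Fin n → Fin q) → K) (S : K → K → ℕ)
    (hsurj : ∀ m, Function.Surjective (C m))
    (hperf : ∀ m, IsPerfectColoring (HammingGraph n (Fin q)) (C m) S)
    (huni : ∀ x y : Fin n → Fin q,
      Multiset.map (fun m => C m x) Finset.univ.val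
        = Multiset.map (fun m => C m y) Finset.univ.val)
    (E : (Fin M → Fin q) → Fin (M * q))
    (hE : IsPerfectColoring (HammingGraph M (Fin q)) E
      (fun a b => if (a : ℕ) % q = (b : ℕ) % q then 0 else 1)) :
    IsPerfectColoring (HammingGraph (M + q * n) (Fin q)) (Fcol hq C E)
      (fun a b => S a b + (if a = b then (q - 1) ^ 2 * n else 0)
        + (q - 1) * (Finset.univ.filter
            fun m : Fin M => C m (fun _ => (⟨0, hq⟩ : Fin q)) = b).card) :=
  stmt9_general hq C S hperf huni E hE
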